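/- Let C be a left proper model category, K a small category, F : K → C a functor landing in cofibrant objects, and equip the category of K-marked objects with cofibrations the maps whose underlying maps are cofibrations and weak equivalences as defined via marked fibrant replacement (with J = ∅). Then the pushout of a weak equivalence of marked objects that is a trivial fibration on underlying objects, along a cofibration of marked objects, is a weak equivalence of marked objects. -/

import Mathlib

open CategoryTheory Limits

universe w v u

/-- Closure of a class of morphisms under retracts in the arrow category. -/
def RetractClosed {C : Type u} [Category.{v} C] (P : MorphismProperty C) : Prop :=
  ∀ {X Y X' Y' : C} (f : X ⟶ Y) (g : X' ⟶ Y')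
    (i : Arrow.mk f ⟶ Arrow.mk g) (p : Arrow.mk g ⟶ Arrow.mk f),
    i ≫ p = 𝟙 (Arrow.mk f) → P g → P f

/-- A model structure on a category: weak equivalences, cofibrations and fibrations
subject to the usual axioms (2-out-of-3, retracts, lifting, factorization). -/
class ModelStruct (C : Type u) [Category.{v} C] where
  W : MorphismProperty C
  Cof : MorphismProperty C
  Fib : MorphismProperty C
  w_of_iso : ∀ {X Y : C} (f : X ⟶ Y), IsIso f → W f
  w_two_of_three : W.HasTwoOutOfThreeProperty
  w_retract : RetractClosed W
  cof_retract : RetractClosed Cof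
  fib_retract : RetractClosed Fib
  lifting_cof_trivFib : ∀ ⦃A B X Y : C⦄ (i : A ⟶ B) (p : X ⟶ Y),
    Cof i → Fib p → W p → HasLiftingProperty i p
  lifting_trivCof_fib : ∀ ⦃A B X Y : C⦄ (i : A ⟶ B) (p : X ⟶ Y),
    Cof i → W i → Fib p → HasLiftingProperty i p
  factorization_cof_trivFib : ∀ {X Y : C} (f : X ⟶ Y),
    ∃ (Z : C) (i : X ⟶ Z) (p : Z ⟶ Y), Cof i ∧ Fib p ∧ W p ∧ i ≫ p = f
  factorization_trivCof_fib : ∀ {X Y : C} (f : X ⟶ Y),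
    ∃ (Z : C) (i : X ⟶ Z) (p : Z ⟶ Y), Cof i ∧ W i ∧ Fib p ∧ i ≫ p = f

variable {C : Type u} [Category.{v} C]

/-- An object is cofibrant if the map from the initial object is a cofibration. -/
def Cofibrant [ModelStruct C] [HasInitial C] (X : C) : Prop :=
  ModelStruct.Cof (initial.to X)

/-- An object is fibrant if the map to the terminal object is a fibration. -/
def Fibrant [ModelStruct C] [HasTerminal C] (X : C) : Prop :=
  ModelStruct.Fib (terminal.from X)

/-- Left homotopy of maps, via a (good) cylinder object. -/
def LeftHomotopic [ModelStruct C] [HasBinaryCoproducts C] {X Y : C} (f g : X ⟶ Y) : Prop :=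
  ∃ (Cl : C) (i₀ i₁ : X ⟶ Cl) (w : Cl ⟶ X) (H : Cl ⟶ Y),
    ModelStruct.Cof (coprod.desc i₀ i₁) ∧ ModelStruct.W w ∧
    i₀ ≫ w = 𝟙 X ∧ i₁ ≫ w = 𝟙 X ∧ i₀ ≫ H = f ∧ i₁ ≫ H = g


/-- A `K`-marked object of `C`: an object together with a subfunctor of `Hom(F(-), X)`. -/
structure MarkedObj {C : Type u} [Category.{v} C] {K : Type w} [Category.{v} K]
    (F : K ⥤ C) where
  pt : C
  marked : ∀ k : K, Set (F.obj k ⟶ pt)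
  comp_mem : ∀ {k k' : K} (g : k ⟶ k') {f : F.obj k' ⟶ pt},
    f ∈ marked k' → F.map g ≫ f ∈ marked k

namespace MarkedObj

variable {C : Type u} [Category.{v} C] {K : Type w} [Category.{v} K] {F : K ⥤ C}

/-- Morphisms of marked objects preserve marked maps. -/
@[ext]
structure Hom (A B : MarkedObj F) where
  hom : A.pt ⟶ B.pt
  pres : ∀ ⦃k : K⦄ ⦃e : F.obj k ⟶ A.pt⦄, e ∈ A.marked k → e ≫ hom ∈ B.marked k

instance : Category (MarkedObj F) where
  Hom := Hom
  id A := ⟨𝟙 _, fun k e he => by simpa using he⟩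
  comp f g := ⟨f.hom ≫ g.hom, fun k e he => by
    simpa [Category.assoc] using g.pres (f.pres he)⟩
  id_comp f := by apply Hom.ext; simp [CategoryStruct.id, CategoryStruct.comp]
  comp_id f := by apply Hom.ext; simp [CategoryStruct.id, CategoryStruct.comp]
  assoc f g h := by apply Hom.ext; simp [CategoryStruct.comp]

@[simp] lemma id_hom (A : MarkedObj F) : Hom.hom (𝟙 A) = 𝟙 A.pt := rfl
@[simp] lemma comp_hom {A B D : MarkedObj F} (f : A ⟶ B) (g : B ⟶ D) :
    (f ≫ g).hom = f.hom ≫ g.hom := rfl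

/-- The forgetful functor. -/
def forget (F : K ⥤ C) : MarkedObj F ⥤ C where
  obj A := A.pt
  map f := f.hom

/-- The flat marked object: no maps are marked. -/
def flatObj (F : K ⥤ C) (X : C) : MarkedObj F :=
  ⟨X, fun _ => ∅, by intro k k' g f h; exact h.elim⟩

/-- The flat functor, left adjoint to `forget`. -/
def flat (F : K ⥤ C) : C ⥤ MarkedObj F where
  obj X := flatObj F X
  map f := ⟨f, by intro k e h; exact h.elim⟩

/-- The sharp marked object: all maps are marked. -/
def sharpObj (F : K ⥤ C) (X : C) : MarkedObj F :=
  ⟨X, fun _ => Set.univ, by intro k k' g f _; trivial⟩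

/-- The sharp functor, right adjoint to `forget`. -/
def sharp (F : K ⥤ C) : C ⥤ MarkedObj F where
  obj X := sharpObj F X
  map f := ⟨f, by intro k e _; trivial⟩

end MarkedObj


namespace MarkedObj

variable {C : Type u} [Category.{v} C] [ModelStruct C] [HasBinaryCoproducts C]
  {K : Type w} [Category.{v} K] {F : K ⥤ C}

/-- The marking of the fibrant replacement `R^m(X)` (with `𝒥 = ∅`): a map
`F(k) ⟶ R(U(X))` is marked iff it is left homotopic to `t_{U(X)}` composed with a
marked map of `X`. -/
def rmMarked (R : C ⥤ C) (t : 𝟭 C ⟶ R) (X : MarkedObj F) :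
    ∀ k : K, Set (F.obj k ⟶ R.obj X.pt) :=
  fun k => {h | ∃ e ∈ X.marked k, LeftHomotopic h (e ≫ t.app X.pt)}

/-- A map of marked objects is a weak equivalence if its underlying map is a weak
equivalence in `C` and `R^m(f)` reflects marked maps. -/
def MWE (R : C ⥤ C) (t : 𝟭 C ⟶ R) {X Y : MarkedObj F} (f : X ⟶ Y) : Prop :=
  ModelStruct.W f.hom ∧
    ∀ (k : K) (h : F.obj k ⟶ R.obj X.pt),
      h ≫ R.map f.hom ∈ rmMarked R t Y k → h ∈ rmMarked R t X k

end MarkedObj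


/-! The forgetful functor to `C` is left adjoint to `sharp`, so it preserves the pushout and left
properness makes `f'` a weak equivalence underneath. Comparing `T` with the marking generated by
`Y` and `Z` shows that every marked map of `T` factors through a marked map of `Y` or of `Z`. A
marked map of `Y` lifts along the trivial fibration `f` (each `F k` is cofibrant), and since `f`
reflects the marking of `R^m`, the lift is homotopic in `R(X)` to a marked map of `X`, which `p`
carries to a marked map of `Z`. Finally, left homotopy classes of maps from a cofibrant object to
a fibrant one are detected after composing with a weak equivalence of fibrant objects, such as
`R(f')`; so homotopies in `R(T)` can be pulled back to `R(Z)`. -/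

open HomotopicalAlgebra

lemma RetractClosed.isStableUnderRetracts {P : MorphismProperty C} (hP : RetractClosed P) :
    P.IsStableUnderRetracts :=
  ⟨fun h hg => hP _ _ h.i h.r h.retract hg⟩

namespace ModelStruct

variable [ModelStruct C]

instance toModelCategory [HasFiniteLimits C] [HasFiniteColimits C] : ModelCategory C where
  categoryWithFibrations := ⟨Fib⟩
  categoryWithCofibrations := ⟨Cof⟩
  categoryWithWeakEquivalences := ⟨W⟩
  cm2 := w_two_of_three
  cm3a := w_retract.isStableUnderRetracts
  cm3b := fib_retract.isStableUnderRetracts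
  cm3c := cof_retract.isStableUnderRetracts
  cm4a i p hi hwi hp := lifting_trivCof_fib i p hi.1 hwi.1 hp.1
  cm4b i p hi hp hwp := lifting_cof_trivFib i p hi.1 hp.1 hwp.1
  cm5a := ⟨fun f => by
    obtain ⟨Z, i, p, hi, hwi, hp, fac⟩ := factorization_trivCof_fib f
    exact ⟨{ Z, i, p, fac, hi := ⟨hi, hwi⟩, hp }⟩⟩
  cm5b := ⟨fun f => by
    obtain ⟨Z, i, p, hi, hp, hwp, fac⟩ := factorization_cof_trivFib f
    exact ⟨{ Z, i, p, fac, hi, hp := ⟨hp, hwp⟩ }⟩⟩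

lemma w_map_of_w_app {R : C ⥤ C} (t : 𝟭 C ⟶ R) (ht : ∀ X, W (t.app X)) {X Y : C} {f : X ⟶ Y}
    (hf : W f) : W (R.map f) := by
  have := w_two_of_three (C := C)
  refine MorphismProperty.of_precomp _ (t.app X) _ (ht X) ?_
  rw [← t.naturality]
  exact MorphismProperty.comp_mem _ _ _ hf (ht Y)

end ModelStruct

lemma leftHomotopic_iff_leftHomotopyRel [ModelStruct C] [HasFiniteLimits C] [HasFiniteColimits C]
    {X Y : C} {f g : X ⟶ Y} : LeftHomotopic f g ↔ LeftHomotopyRel f g := by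
  constructor
  · rintro ⟨I, i₀, i₁, π, H, -, hπ, i₀_π, i₁_π, rfl, rfl⟩
    exact ⟨{ I, i₀, i₁, π, i₀_π, i₁_π, weakEquivalence_π := ⟨hπ⟩ }, ⟨{ h := H }⟩⟩
  · intro h
    obtain ⟨P, hP, ⟨H⟩⟩ := h.exists_good_cylinder
    exact ⟨P.I, P.i₀, P.i₁, P.π, H.h, hP.cofibration_i.1, P.weakEquivalence_π.1, P.i₀_π, P.i₁_π,
      H.h₀, H.h₁⟩

lemma HomotopicalAlgebra.LeftHomotopyRel.of_postcomp_weakEquivalence [ModelCategory C]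
    {A P Q : C} [IsCofibrant A] [IsFibrant P] [IsFibrant Q] {a b : A ⟶ P} (v : P ⟶ Q)
    [WeakEquivalence v] (h : LeftHomotopyRel (a ≫ v) (b ≫ v)) : LeftHomotopyRel a b := by
  rw [← LeftHomotopyClass.mk_eq_mk_iff] at h ⊢
  exact (LeftHomotopyClass.postcomp_bijective_of_weakEquivalence A v).injective
    (by simpa only [LeftHomotopyClass.postcomp_mk] using h)

namespace MarkedObj

variable {K : Type w} [Category.{v} K] {F : K ⥤ C}

@[ext]
lemma hom_ext {A B : MarkedObj F} {f g : A ⟶ B} (h : f.hom = g.hom) : f = g := Hom.ext h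

def forgetAdjSharp : forget F ⊣ sharp F :=
  Adjunction.mkOfHomEquiv
    { homEquiv A X :=
        { toFun g := ⟨g, fun _ _ _ => trivial⟩
          invFun g := g.hom
          left_inv _ := rfl
          right_inv _ := rfl } }

instance : PreservesColimits (forget F) := forgetAdjSharp.leftAdjoint_preservesColimits

lemma isPushout_hom {X Y Z T : MarkedObj F} {f : X ⟶ Y} {p : X ⟶ Z} {q : Y ⟶ T} {f' : Z ⟶ T}
    (sq : IsPushout f p q f') : IsPushout f.hom p.hom q.hom f'.hom :=
  (forget F).map_isPushout sq

abbrev jointImage {Y Z T : MarkedObj F} (q : Y ⟶ T) (f' : Z ⟶ T) : MarkedObj F where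
  pt := T.pt
  marked k := {e | (∃ m ∈ Y.marked k, m ≫ q.hom = e) ∨ ∃ m ∈ Z.marked k, m ≫ f'.hom = e}
  comp_mem := by
    rintro k k' g e (⟨m, hm, rfl⟩ | ⟨m, hm, rfl⟩)
    · exact Or.inl ⟨F.map g ≫ m, Y.comp_mem g hm, Category.assoc _ _ _⟩
    · exact Or.inr ⟨F.map g ≫ m, Z.comp_mem g hm, Category.assoc _ _ _⟩

lemma marked_of_isPushout {X Y Z T : MarkedObj F} {f : X ⟶ Y} {p : X ⟶ Z} {q : Y ⟶ T}
    {f' : Z ⟶ T} (sq : IsPushout f p q f') {k : K} {e : F.obj k ⟶ T.pt} (he : e ∈ T.marked k) :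
    (∃ m ∈ Y.marked k, m ≫ q.hom = e) ∨ ∃ m ∈ Z.marked k, m ≫ f'.hom = e := by
  let σ : T ⟶ jointImage q f' :=
    sq.desc ⟨q.hom, fun _ m hm => Or.inl ⟨m, hm, rfl⟩⟩ ⟨f'.hom, fun _ m hm => Or.inr ⟨m, hm, rfl⟩⟩
      (by ext; simpa using congrArg Hom.hom sq.w)
  have hσ : σ.hom = 𝟙 T.pt := (isPushout_hom sq).hom_ext
    ((congrArg Hom.hom (sq.inl_desc _ _ _)).trans (Category.comp_id _).symm)
    ((congrArg Hom.hom (sq.inr_desc _ _ _)).trans (Category.comp_id _).symm)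
  have hmarked := σ.pres he
  rwa [hσ, Category.comp_id] at hmarked

section Homotopy

variable [ModelStruct C] [HasFiniteLimits C] [HasFiniteColimits C] {R : C ⥤ C} {t : 𝟭 C ⟶ R}

lemma mem_rmMarked_iff {X : MarkedObj F} {k : K} {h : F.obj k ⟶ R.obj X.pt} :
    h ∈ rmMarked R t X k ↔ ∃ e ∈ X.marked k, LeftHomotopyRel h (e ≫ t.app X.pt) := by
  simp [rmMarked, leftHomotopic_iff_leftHomotopyRel]

lemma MWE.exists_marked_leftHomotopyRel {X Y : MarkedObj F} {f : X ⟶ Y} (hf : MWE R t f)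
    (hffib : ModelStruct.Fib f.hom) {k : K} (hk : Cofibrant (F.obj k)) {m : F.obj k ⟶ Y.pt}
    (hm : m ∈ Y.marked k) :
    ∃ e ∈ X.marked k, LeftHomotopyRel ((e ≫ t.app X.pt) ≫ R.map f.hom) (m ≫ t.app Y.pt) := by
  have : IsCofibrant (F.obj k) := ⟨hk⟩
  have : Fibration f.hom := ⟨hffib⟩
  have : WeakEquivalence f.hom := ⟨hf.1⟩
  have sq : CommSq (initial.to X.pt) (initial.to (F.obj k)) f.hom m := ⟨initial.hom_ext _ _⟩
  have hnat : (sq.lift ≫ t.app X.pt) ≫ R.map f.hom = m ≫ t.app Y.pt := by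
    simp [← t.naturality, reassoc_of% sq.fac_right]
  obtain ⟨e, he, hrel⟩ := mem_rmMarked_iff.1 <| hf.2 k _ <|
    mem_rmMarked_iff.2 ⟨m, hm, by rw [hnat]; exact .refl _⟩
  exact ⟨e, he, hnat ▸ (hrel.postcomp (R.map f.hom)).symm⟩

lemma exists_marked_leftHomotopyRel_of_isPushout {X Y Z T : MarkedObj F} {f : X ⟶ Y}
    {p : X ⟶ Z} {q : Y ⟶ T} {f' : Z ⟶ T} (sq : IsPushout f p q f') (hf : MWE R t f)
    (hffib : ModelStruct.Fib f.hom) {k : K} (hk : Cofibrant (F.obj k)) {e : F.obj k ⟶ T.pt}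
    (he : e ∈ T.marked k) :
    ∃ e' ∈ Z.marked k, LeftHomotopyRel ((e' ≫ t.app Z.pt) ≫ R.map f'.hom) (e ≫ t.app T.pt) := by
  have w : f.hom ≫ q.hom = p.hom ≫ f'.hom := congrArg Hom.hom sq.w
  rcases marked_of_isPushout sq he with ⟨m, hm, rfl⟩ | ⟨m, hm, rfl⟩
  · obtain ⟨e₀, he₀, hrel⟩ := hf.exists_marked_leftHomotopyRel hffib hk hm
    refine ⟨e₀ ≫ p.hom, p.pres he₀, ?_⟩
    convert hrel.postcomp (R.map q.hom) using 1 <;>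
      simp [← NatTrans.naturality, reassoc_of% w]
  · refine ⟨m, hm, ?_⟩
    convert LeftHomotopyRel.refl ((m ≫ f'.hom) ≫ t.app T.pt) using 1
    simp [← NatTrans.naturality]

end Homotopy

end MarkedObj

open MarkedObj in
theorem markedObj_left_proper_general {C : Type u} [Category.{v} C]
    [HasLimits C] [HasColimits C] [ModelStruct C]
    (hproper : ∀ {A B A' P : C} (w : A ⟶ B) (c : A ⟶ A') (q : B ⟶ P) (w' : A' ⟶ P),
      IsPushout w c q w' → ModelStruct.W w → ModelStruct.Cof c → ModelStruct.W w')
    {K : Type w} [Category.{v} K] (F : K ⥤ C)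
    (hF : ∀ k : K, Cofibrant (F.obj k))
    (R : C ⥤ C) (t : 𝟭 C ⟶ R)
    (hRfib : ∀ X : C, Fibrant (R.obj X))
    (hRwe : ∀ X : C, ModelStruct.W (t.app X))
    {X Y Z T : MarkedObj F} (f : X ⟶ Y) (p : X ⟶ Z) (q : Y ⟶ T) (f' : Z ⟶ T)
    (sq : IsPushout f p q f')
    (hf : MWE R t f) (hffib : ModelStruct.Fib f.hom)
    (hp : ModelStruct.Cof p.hom) :
    MWE R t f' := by
  have hWf' : ModelStruct.W f'.hom := hproper _ _ _ _ (isPushout_hom sq) hf.1 hp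
  refine ⟨hWf', fun k h hh => ?_⟩
  obtain ⟨e, he, hhe⟩ := mem_rmMarked_iff.1 hh
  obtain ⟨e', he', hrel⟩ := exists_marked_leftHomotopyRel_of_isPushout sq hf hffib (hF k) he
  have : IsCofibrant (F.obj k) := ⟨hF k⟩
  have : IsFibrant (R.obj Z.pt) := ⟨hRfib _⟩
  have : IsFibrant (R.obj T.pt) := ⟨hRfib _⟩
  have : WeakEquivalence (R.map f'.hom) := ⟨ModelStruct.w_map_of_w_app t hRwe hWf'⟩
  exact mem_rmMarked_iff.2 ⟨e', he', (hhe.trans hrel.symm).of_postcomp_weakEquivalence _⟩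

open MarkedObj in
/-- if `C` is a left proper model category and `F : K ⥤ C` lands in
cofibrant objects, then in the category of marked objects (with weak equivalences
defined via the marked fibrant replacement, `𝒥 = ∅`) the pushout of a weak
equivalence which is a trivial fibration on underlying objects, along a cofibration
(a map whose underlying map is a cofibration), is again a weak equivalence. -/
theorem markedObj_left_proper {C : Type u} [Category.{v} C]
    [HasLimits C] [HasColimits C] [ModelStruct C]
    (hproper : ∀ {A B A' P : C} (w : A ⟶ B) (c : A ⟶ A') (q : B ⟶ P) (w' : A' ⟶ P),
      IsPushout w c q w' → ModelStruct.W w → ModelStruct.Cof c → ModelStruct.W w')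
    {K : Type w} [Category.{v} K] (F : K ⥤ C)
    (hF : ∀ k : K, Cofibrant (F.obj k))
    (R : C ⥤ C) (t : 𝟭 C ⟶ R)
    (hRfib : ∀ X : C, Fibrant (R.obj X))
    (hRwe : ∀ X : C, ModelStruct.W (t.app X))
    {X Y Z T : MarkedObj F} (f : X ⟶ Y) (p : X ⟶ Z) (q : Y ⟶ T) (f' : Z ⟶ T)
    (sq : IsPushout f p q f')
    (hf : MWE R t f) (hffib : ModelStruct.Fib f.hom) (hfwe : ModelStruct.W f.hom)
    (hp : ModelStruct.Cof p.hom) :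
    MWE R t f' :=
  markedObj_left_proper_general hproper F hF R t hRfib hRwe f p q f' sq hf hffib hp
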